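/- arXiv:2311.01359 — 6 statements merged into one kernel-verified Lean document; each statement's English description precedes it below -/
import Mathlib

section
/- Let 0 < ρ < r be real numbers, let β ≥ 1 be a natural number, and let A, B : ℂ → ℂ be analytic on the open disk {|z| < r} with B(ρ) ≠ 0. Let (d_k)_{k≥0} be the Taylor coefficients at 0 of the function g(z) = A(z) + B(z)(1 − z/ρ)^{−β}, which is analytic on {|z| < ρ}. Then d_k ∼ (B(ρ)/Γ(β)) k^{β−1} ρ^{−k} as k → ∞; that is, d_k · ρ^k / k^{β−1} → B(ρ)/(β−1)! as k → ∞. -/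
open Filter Finset


private lemma tendsto_natCast_inv_zero :
    Tendsto (fun k : ℕ => ((k : ℂ))⁻¹) atTop (nhds 0) := by
  have := (Complex.continuous_ofReal.tendsto 0).comp (tendsto_inv_atTop_nhds_zero_nat (𝕜 := ℝ))
  simpa [Function.comp_def] using this

private lemma tendsto_add_div_self (c : ℂ) :
    Tendsto (fun k : ℕ => ((k : ℂ) + c) / (k : ℂ)) atTop (nhds 1) := by
  have h2 : Tendsto (fun k : ℕ => 1 + c * ((k : ℂ))⁻¹) atTop (nhds 1) := by
    simpa using tendsto_const_nhds.add (tendsto_natCast_inv_zero.const_mul c)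
  apply h2.congr'
  filter_upwards [eventually_ne_atTop 0] with k hk
  have hk' : (k : ℂ) ≠ 0 := Nat.cast_ne_zero.mpr hk
  field_simp

private lemma tendsto_choose_div_pow (q j : ℕ) :
    Tendsto (fun k : ℕ => (((k - j + q).choose q : ℕ) : ℂ) / (k : ℂ) ^ q) atTop
      (nhds ((q.factorial : ℂ))⁻¹) := by
  have hq : (q.factorial : ℂ) ≠ 0 := by exact_mod_cast q.factorial_ne_zero
  have key : Tendsto (fun k : ℕ => (q.factorial : ℂ)⁻¹ *
      ∏ i ∈ range q, (((k : ℂ) + ((q : ℂ) - i - j)) / (k : ℂ))) atTop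
      (nhds ((q.factorial : ℂ))⁻¹) := by
    have := tendsto_finset_prod (f := fun (i : ℕ) (k : ℕ) => ((k : ℂ) + ((q : ℂ) - i - j)) / k)
      (x := atTop) (a := fun _ => 1) (range q) (fun i _ => tendsto_add_div_self _)
    simpa using this.const_mul ((q.factorial : ℂ))⁻¹
  apply key.congr'
  filter_upwards [eventually_ge_atTop j, eventually_ge_atTop 1] with k hjk hk1
  have hk0 : (k : ℂ) ≠ 0 := Nat.cast_ne_zero.mpr (by omega)
  have hnat : (q.factorial * ((k - j + q).choose q) : ℕ) = ∏ i ∈ range q, (k - j + q - i) := by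
    rw [← Nat.descFactorial_eq_factorial_mul_choose, Nat.descFactorial_eq_prod_range]
  have hd : (q.factorial : ℂ) * (((k - j + q).choose q : ℕ) : ℂ)
      = ∏ i ∈ range q, ((k : ℂ) + ((q : ℂ) - i - j)) := by
    calc (q.factorial : ℂ) * (((k - j + q).choose q : ℕ) : ℂ)
        = ((∏ i ∈ range q, (k - j + q - i) : ℕ) : ℂ) := by exact_mod_cast congrArg Nat.cast hnat
      _ = ∏ i ∈ range q, ((k : ℂ) + ((q : ℂ) - i - j)) := by
          rw [Nat.cast_prod]
          refine Finset.prod_congr rfl (fun i hi => ?_)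
          have hi' : i < q := mem_range.mp hi
          rw [Nat.cast_sub (by omega : i ≤ k - j + q), Nat.cast_add, Nat.cast_sub hjk]
          ring
  rw [Finset.prod_div_distrib, Finset.prod_const, card_range, ← hd]
  field_simp

private lemma exists_coeff {r : ℝ} {F : ℂ → ℂ} (hF : AnalyticOnNhd ℂ F (Metric.ball (0 : ℂ) r))
    {ρ' : ℝ} (h0 : 0 < ρ') (h1 : ρ' < r) :
    ∃ a : ℕ → ℂ, (∀ z : ℂ, ‖z‖ < ρ' → HasSum (fun n => a n * z ^ n) (F z)) ∧
      (∀ t : ℝ, 0 ≤ t → t < ρ' → Summable (fun n => ‖a n‖ * t ^ n)) := by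
  set R : NNReal := ⟨ρ', h0.le⟩ with hR
  have hR0 : 0 < R := by exact_mod_cast h0
  have hdiff : DifferentiableOn ℂ F (Metric.closedBall (0 : ℂ) R) := by
    exact (hF.mono (Metric.closedBall_subset_ball h1)).differentiableOn
  have h := hdiff.hasFPowerSeriesOnBall hR0
  set p := cauchyPowerSeries F 0 R with hp
  refine ⟨p.coeff, ?_, ?_⟩
  · intro z hz
    have hz' : z ∈ Metric.eball (0 : ℂ) R := by
      rw [mem_emetric_ball_zero_iff]
      exact_mod_cast (show ‖z‖₊ < R by exact_mod_cast hz)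
    have := h.hasSum hz'
    simp only [FormalMultilinearSeries.apply_eq_pow_smul_coeff, smul_eq_mul, zero_add] at this
    exact this.congr_fun (fun n => mul_comm _ _)
  · intro t ht0 ht1
    set T : NNReal := ⟨t, ht0⟩ with hT
    have hTrad : (T : ENNReal) < p.radius := by
      refine lt_of_lt_of_le ?_ h.r_le
      exact_mod_cast (show T < R by exact_mod_cast ht1)
    have := p.summable_norm_mul_pow hTrad
    refine this.congr (fun n => ?_)
    rw [FormalMultilinearSeries.norm_apply_eq_norm_coef]
    rfl

private lemma coeff_unique {ρ : ℝ} (hρ : 0 < ρ) {f : ℂ → ℂ} {c c' : ℕ → ℂ}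
    (h : ∀ z : ℂ, ‖z‖ < ρ → HasSum (fun k => c k * z ^ k) (f z))
    (h' : ∀ z : ℂ, ‖z‖ < ρ → HasSum (fun k => c' k * z ^ k) (f z)) : c = c' := by
  have key : ∀ (g : ℕ → ℂ), (∀ z : ℂ, ‖z‖ < ρ → HasSum (fun k => g k * z ^ k) (f z)) →
      HasFPowerSeriesAt f (FormalMultilinearSeries.ofScalars ℂ g) 0 := by
    intro g hg
    rw [hasFPowerSeriesAt_iff]
    filter_upwards [Metric.ball_mem_nhds (0 : ℂ) hρ] with z hz
    have hz' : ‖z‖ < ρ := by simpa using hz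
    have hcoeff : ∀ n, (FormalMultilinearSeries.ofScalars ℂ g).coeff n = g n := by
      intro n
      simp [FormalMultilinearSeries.coeff, FormalMultilinearSeries.ofScalars, Pi.one_def,
        List.ofFn_const, List.prod_replicate]
    have := hg z hz'
    refine HasSum.congr_fun (by simpa using this) (fun n => ?_)
    rw [hcoeff, smul_eq_mul, mul_comm]
  have := (key c h).eq_formalMultilinearSeries (key c' h')
  exact FormalMultilinearSeries.ofScalars_series_injective ℂ ℂ this


open Filter in
/-- Asymptotics of Taylor coefficients of `g(z) = A(z) + B(z)(1 - z/ρ)^{-β}` with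
`A`, `B` analytic on `{|z| < r}`, `0 < ρ < r`, `B(ρ) ≠ 0`, `β ≥ 1`:
`d_k ∼ (B(ρ)/Γ(β)) k^{β-1} ρ^{-k}`, i.e. `d_k ρ^k / k^{β-1} → B(ρ)/(β-1)!`. -/
theorem taylor_coefficient_asymptotics (ρ r : ℝ) (hρ : 0 < ρ) (hρr : ρ < r)
    (β : ℕ) (hβ : 1 ≤ β) (A B : ℂ → ℂ)
    (hA : AnalyticOnNhd ℂ A (Metric.ball (0 : ℂ) r))
    (hB : AnalyticOnNhd ℂ B (Metric.ball (0 : ℂ) r))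
    (hBρ : B ρ ≠ 0) (d : ℕ → ℂ)
    (hd : ∀ z : ℂ, ‖z‖ < ρ →
      HasSum (fun k : ℕ => d k * z ^ k) (A z + B z * ((1 - z / (ρ : ℂ)) ^ β)⁻¹)) :
    Tendsto (fun k : ℕ => d k * (ρ : ℂ) ^ k / (k : ℂ) ^ (β - 1)) atTop
      (nhds (B ρ / (Nat.factorial (β - 1) : ℂ))) := by
  obtain ⟨q, rfl⟩ : ∃ q, β = q + 1 := ⟨β - 1, (Nat.succ_pred_eq_of_pos hβ).symm⟩
  simp only [Nat.add_sub_cancel]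
  set ρ' : ℝ := (ρ + r) / 2 with hρ'def
  have hρρ' : ρ < ρ' := by rw [hρ'def]; linarith
  have hρ'r : ρ' < r := by rw [hρ'def]; linarith
  have hρ'0 : 0 < ρ' := lt_trans hρ hρρ'
  obtain ⟨a, haSum, haSummable⟩ := exists_coeff hA hρ'0 hρ'r
  obtain ⟨b, hbSum, hbSummable⟩ := exists_coeff hB hρ'0 hρ'r
  have hρ0 : (ρ : ℂ) ≠ 0 := by exact_mod_cast hρ.ne'
  have hnormρ : ‖(ρ : ℂ)‖ = ρ := by
    rw [Complex.norm_real, Real.norm_eq_abs, abs_of_pos hρ]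
  set u : ℕ → ℂ := fun n => ((n + q).choose q : ℂ) / (ρ : ℂ) ^ n with hu_def
  have hwlt : ∀ z : ℂ, ‖z‖ < ρ → ‖z / (ρ : ℂ)‖ < 1 := by
    intro z hz
    rw [norm_div, hnormρ, div_lt_one hρ]
    exact hz
  have huz : ∀ (z : ℂ) (n : ℕ), u n * z ^ n
      = ((n + q).choose q : ℂ) * (z / (ρ : ℂ)) ^ n := by
    intro z n
    rw [hu_def]
    simp only
    rw [div_pow]
    field_simp
  have hu : ∀ z : ℂ, ‖z‖ < ρ →
      HasSum (fun n => u n * z ^ n) (((1 - z / (ρ : ℂ)) ^ (q + 1))⁻¹) := by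
    intro z hz
    have := hasSum_choose_mul_geometric_of_norm_lt_one q (hwlt z hz)
    rw [one_div] at this
    exact (this.congr_fun (fun n => huz z n))
  set e : ℕ → ℂ := fun k => a k + ∑ j ∈ range (k + 1), b j * u (k - j) with he_def
  have hsum_e : ∀ z : ℂ, ‖z‖ < ρ → HasSum (fun k => e k * z ^ k)
      (A z + B z * ((1 - z / (ρ : ℂ)) ^ (q + 1))⁻¹) := by
    intro z hz
    have hzρ' : ‖z‖ < ρ' := hz.trans hρρ'
    have hb_ns : Summable (fun n => ‖b n * z ^ n‖) := by
      refine (hbSummable ‖z‖ (norm_nonneg z) hzρ').congr (fun n => ?_)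
      rw [norm_mul, norm_pow]
    have hu_ns : Summable (fun n => ‖u n * z ^ n‖) := by
      have I1 : Summable (fun n : ℕ => ‖(((n + q).choose q : ℕ) : ℂ) * (z / (ρ : ℂ)) ^ n‖) := by
        apply summable_norm_mul_geometric_of_norm_lt_one (k := q)
          (u := fun n => (n + q).choose q) (hwlt z hz)
        apply Asymptotics.isBigO_iff.2 ⟨2 ^ q, ?_⟩
        filter_upwards [eventually_gt_atTop q] with n hn
        simp only [Real.norm_eq_abs, Nat.abs_cast, Nat.cast_pow]
        norm_cast
        calc (n + q).choose q ≤ (2 * n).choose q := Nat.choose_le_choose q (by omega)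
          _ ≤ (2 * n) ^ q := Nat.choose_le_pow _ _
          _ = 2 ^ q * n ^ q := Nat.mul_pow 2 n q
      refine I1.congr (fun n => ?_)
      rw [← huz z n]
    have hcb := hasSum_sum_range_mul_of_summable_norm hb_ns hu_ns
    rw [(hbSum z hzρ').tsum_eq, (hu z hz).tsum_eq] at hcb
    have hcb' : HasSum (fun n => (∑ j ∈ range (n + 1), b j * u (n - j)) * z ^ n)
        (B z * ((1 - z / (ρ : ℂ)) ^ (q + 1))⁻¹) := by
      refine hcb.congr_fun (fun n => ?_)
      rw [Finset.sum_mul]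
      refine Finset.sum_congr rfl (fun j hj => ?_)
      have hj' : j ≤ n := Nat.lt_succ_iff.mp (mem_range.mp hj)
      have hzn : z ^ n = z ^ j * z ^ (n - j) := by
        rw [← pow_add]
        congr 1
        omega
      rw [hzn]
      ring
    have := (haSum z hzρ').add hcb'
    refine this.congr_fun (fun k => ?_)
    simp only [he_def]
    ring
  have hde : d = e := coeff_unique hρ hd hsum_e
  rw [hde]
  have hq1 : (0:ℝ) < ((q:ℝ) + 1) ^ q := by positivity
  -- First part: analytic part tends to zero
  have key1 : Tendsto (fun k : ℕ => a k * (ρ : ℂ) ^ k / (k : ℂ) ^ q) atTop (nhds 0) := by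
    apply squeeze_zero_norm' (a := fun k => ‖a k‖ * ρ ^ k)
    · filter_upwards [eventually_ge_atTop 1] with k hk
      have h1 : (1 : ℝ) ≤ ‖(k : ℂ) ^ q‖ := by
        rw [norm_pow, Complex.norm_natCast]
        exact one_le_pow₀ (by exact_mod_cast hk)
      have h2 : ‖a k * (ρ : ℂ) ^ k‖ = ‖a k‖ * ρ ^ k := by
        rw [norm_mul, norm_pow, hnormρ]
      calc ‖a k * (ρ : ℂ) ^ k / (k : ℂ) ^ q‖
          = ‖a k * (ρ : ℂ) ^ k‖ / ‖(k : ℂ) ^ q‖ := norm_div _ _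
        _ ≤ ‖a k * (ρ : ℂ) ^ k‖ / 1 := by gcongr
        _ = ‖a k‖ * ρ ^ k := by rw [div_one, h2]
    · exact (haSummable ρ hρ.le hρρ').tendsto_atTop_zero
  have hbρsum : Summable (fun j => ‖b j‖ * ρ ^ j) := hbSummable ρ hρ.le hρρ'
  set f : ℕ → ℕ → ℂ := fun k j => if j ≤ k then
      b j * (((k - j + q).choose q : ℕ) : ℂ) * (ρ : ℂ) ^ j / (k : ℂ) ^ q else 0 with hf_def
  have key2 : Tendsto (fun k : ℕ => ∑' j, f k j) atTop
      (nhds (∑' j, b j * (ρ : ℂ) ^ j * ((q.factorial : ℂ))⁻¹)) := by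
    apply tendsto_tsum_of_dominated_convergence
      (bound := fun j => ((q : ℝ) + 1) ^ q * (‖b j‖ * ρ ^ j))
    · exact hbρsum.mul_left _
    · intro j
      have hT := (tendsto_choose_div_pow q j).const_mul (b j * (ρ : ℂ) ^ j)
      apply hT.congr'
      filter_upwards [eventually_ge_atTop j] with k hk
      simp only [hf_def, if_pos hk]
      ring
    · filter_upwards [eventually_ge_atTop 1] with k hk j
      by_cases hj : j ≤ k
      · simp only [hf_def, if_pos hj]
        have hkq : (0:ℝ) < (k:ℝ) ^ q := by positivity
        have hch : (((k - j + q).choose q : ℕ) : ℝ) ≤ ((q : ℝ) + 1) ^ q * (k : ℝ) ^ q := by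
          have h1 : (k - j + q).choose q ≤ (k - j + q) ^ q := Nat.choose_le_pow _ _
          have hle : k - j + q ≤ (q + 1) * k := by
            have h3 : q ≤ q * k := Nat.le_mul_of_pos_right q (by omega)
            calc k - j + q ≤ k + q := by omega
              _ ≤ k + q * k := by omega
              _ = (q + 1) * k := by ring
          have h2 : (k - j + q) ^ q ≤ ((q + 1) * k) ^ q := Nat.pow_le_pow_left hle q
          calc (((k - j + q).choose q : ℕ) : ℝ) ≤ ((((q + 1) * k) ^ q : ℕ) : ℝ) := by
                exact_mod_cast h1.trans h2
            _ = ((q : ℝ) + 1) ^ q * (k : ℝ) ^ q := by push_cast [Nat.mul_pow]; ring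
        have hnorm : ‖b j * (((k - j + q).choose q : ℕ) : ℂ) * (ρ : ℂ) ^ j / (k : ℂ) ^ q‖
            = ‖b j‖ * (((k - j + q).choose q : ℕ) : ℝ) * ρ ^ j / (k : ℝ) ^ q := by
          rw [norm_div, norm_mul, norm_mul, norm_pow, norm_pow, hnormρ,
            Complex.norm_natCast, Complex.norm_natCast]
        rw [hnorm]
        calc ‖b j‖ * (((k - j + q).choose q : ℕ) : ℝ) * ρ ^ j / (k : ℝ) ^ q
            ≤ ‖b j‖ * (((q : ℝ) + 1) ^ q * (k : ℝ) ^ q) * ρ ^ j / (k : ℝ) ^ q := by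
              gcongr
          _ = ((q : ℝ) + 1) ^ q * (‖b j‖ * ρ ^ j) := by field_simp
      · simp only [hf_def, if_neg hj, norm_zero]
        positivity
  have htsum_g : (∑' j, b j * (ρ : ℂ) ^ j * ((q.factorial : ℂ))⁻¹)
      = B ρ / (q.factorial : ℂ) := by
    rw [tsum_mul_right]
    have := (hbSum (ρ : ℂ) (by rw [hnormρ]; exact hρρ')).tsum_eq
    rw [this, div_eq_mul_inv]
  rw [htsum_g] at key2
  have key2' : Tendsto (fun k : ℕ =>
      (∑ j ∈ range (k + 1), b j * u (k - j)) * (ρ : ℂ) ^ k / (k : ℂ) ^ q) atTop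
      (nhds (B ρ / (q.factorial : ℂ))) := by
    apply key2.congr
    intro k
    have hzero : ∀ j ∉ range (k + 1), f k j = 0 := by
      intro j hj
      have hj' : ¬ j ≤ k := by
        simp only [mem_range, not_lt] at hj
        omega
      simp only [hf_def, if_neg hj']
    rw [tsum_eq_sum hzero, Finset.sum_mul, Finset.sum_div]
    refine Finset.sum_congr rfl (fun j hj => ?_)
    have hj' : j ≤ k := Nat.lt_succ_iff.mp (mem_range.mp hj)
    simp only [hf_def, if_pos hj']
    have hρk : (ρ : ℂ) ^ k = (ρ : ℂ) ^ (k - j) * (ρ : ℂ) ^ j := by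
      rw [← pow_add]
      congr 1
      omega
    rw [hu_def]
    simp only
    rw [hρk, ← mul_assoc]
    have hx : (ρ : ℂ) ^ (k - j) ≠ 0 := pow_ne_zero _ hρ0
    conv_rhs => rw [mul_assoc (b j), div_mul_cancel₀ _ hx]
  have := key1.add key2'
  rw [zero_add] at this
  apply this.congr
  intro k
  simp only [he_def]
  ring
end

section
/- Let 1 < r be a real number, let β ≥ 1 be a natural number, and let A, B : ℂ → ℂ be analytic on the open disk {|z| < r} with B(1) ≠ 0. Let (d_k)_{k≥0} be the Taylor coefficients at 0 of the function g(z) = A(z) + B(z)(1 − z)^{−β}, which is analytic on {|z| < 1}. Then there is a constant γ = B(1)/(β−1)! such that d_k ∼ γ k^{β−1} as k → ∞, i.e. d_k / k^{β−1} → B(1)/(β−1)!; in particular the coefficients grow polynomially of degree β−1. -/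
open Filter Metric FormalMultilinearSeries
open scoped NNReal ENNReal

/-- Uniqueness of Taylor coefficients: if ∑ c_k z^k = 0 on the unit disk, all c_k = 0. -/
lemma coeffs_eq_zero_aux (c : ℕ → ℂ)
    (h : ∀ z : ℂ, ‖z‖ < 1 → HasSum (fun k : ℕ => c k * z ^ k) 0) : ∀ k, c k = 0 := by
  have hs : Summable fun k : ℕ => ‖c k‖ * ((1/2 : ℝ≥0) : ℝ) ^ k := by
    have := (h (1/2) (by norm_num)).summable
    rw [← summable_norm_iff] at this
    refine this.congr fun k => ?_
    simp [norm_mul, norm_pow]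
  have hrad : ((1/2 : ℝ≥0) : ℝ≥0∞) ≤ (ofScalars ℂ c).radius := by
    apply le_radius_of_summable_norm
    refine hs.congr fun k => ?_
    rw [ofScalars_norm]
  have hball : HasFPowerSeriesOnBall (0 : ℂ → ℂ) (ofScalars ℂ c) 0 ((1/2 : ℝ≥0) : ℝ≥0∞) := by
    refine ⟨hrad, by norm_num, ?_⟩
    intro y hy
    rw [mem_emetric_ball_zero_iff] at hy
    have hy' : ‖y‖ < 1 := by
      have : (‖y‖₊ : ℝ) < ((1/2 : ℝ≥0) : ℝ) := by exact_mod_cast hy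
      simp only [coe_nnnorm] at this
      have h2 : ((1/2 : ℝ≥0) : ℝ) = 1/2 := by norm_num
      linarith [this, h2.le]
    simp only [ofScalars_apply_eq, smul_eq_mul, zero_add, Pi.zero_apply]
    exact h y hy'
  have hp0 : ofScalars ℂ c = 0 := hball.hasFPowerSeriesAt.eq_zero
  have := (ofScalars_series_eq_zero ℂ (c := c)).mp hp0
  intro k; exact congrFun this k

lemma dslope_mul_aux (B : ℂ → ℂ) (z : ℂ) : B z - B 1 = (z - 1) * dslope B 1 z := by
  rcases eq_or_ne z 1 with h | h
  · simp [h]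
  · rw [dslope_of_ne _ h, slope_def_field]
    rw [mul_div_assoc', mul_comm, mul_div_assoc, div_self (sub_ne_zero.mpr h), mul_one]

set_option maxHeartbeats 1000000 in
lemma exists_coeffs_tendsto_zero_aux {r : ℝ} (hr : 1 < r) (f : ℂ → ℂ)
    (hf : DifferentiableOn ℂ f (Metric.ball 0 r)) :
    ∃ e : ℕ → ℂ, (∀ z : ℂ, ‖z‖ < 1 → HasSum (fun k : ℕ => e k * z ^ k) (f z)) ∧
      Tendsto e atTop (nhds 0) := by
  set R : ℝ≥0 := ⟨(1 + r) / 2, by positivity⟩ with hRdef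
  have hR1 : 1 < (R : ℝ) := by simp only [hRdef, NNReal.coe_mk]; change (1:ℝ) < (1 + r) / 2; linarith
  have hRr : (R : ℝ) < r := by simp only [hRdef, NNReal.coe_mk]; change (1 + r) / 2 < r; linarith
  have hsub : Metric.closedBall (0:ℂ) R ⊆ Metric.ball 0 r := closedBall_subset_ball hRr
  have hR0 : 0 < R := by
    rw [← NNReal.coe_lt_coe]; push_cast; linarith
  have h := (hf.mono hsub).hasFPowerSeriesOnBall hR0
  set p := cauchyPowerSeries f 0 R with hp
  refine ⟨fun k => p.coeff k, ?_, ?_⟩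
  · intro z hz
    have hzmem : z ∈ Metric.eball (0:ℂ) R := by
      rw [mem_emetric_ball_zero_iff]
      have : (‖z‖₊ : ℝ) < (R : ℝ) := by
        rw [coe_nnnorm]; linarith
      exact_mod_cast this
    have h2 := h.hasSum hzmem
    simp only [FormalMultilinearSeries.apply_eq_pow_smul_coeff, smul_eq_mul, zero_add] at h2
    simpa [mul_comm] using h2
  · have hrad : ((1 : ℝ≥0) : ℝ≥0∞) < p.radius := by
      refine lt_of_lt_of_le ?_ h.r_le
      exact_mod_cast hR1
    have hs := p.summable_norm_mul_pow (r := 1) hrad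
    simp only [NNReal.coe_one, one_pow, mul_one] at hs
    rw [tendsto_zero_iff_norm_tendsto_zero]
    refine squeeze_zero (fun n => norm_nonneg _) (fun n => ?_) hs.tendsto_atTop_zero
    have h1 : ‖p.coeff n‖ ≤ ‖p n‖ * ∏ _i : Fin n, ‖(1:ℂ)‖ := (p n).le_opNorm _
    simpa using h1

lemma tendsto_inv_nat_complex : Tendsto (fun k : ℕ => ((k:ℂ))⁻¹) atTop (nhds 0) := by
  rw [tendsto_zero_iff_norm_tendsto_zero]
  simp only [norm_inv, Complex.norm_natCast]
  exact tendsto_inv_atTop_zero.comp tendsto_natCast_atTop_atTop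

lemma choose_div_tendsto_aux (m : ℕ) :
    Tendsto (fun k : ℕ => (((k + m).choose m : ℕ) : ℂ) / (k:ℂ)^m) atTop
      (nhds (1 / (Nat.factorial m : ℂ))) := by
  have hfac : ∀ i ∈ Finset.range m,
      Tendsto (fun k : ℕ => (((k + m - i : ℕ)) : ℂ) / (k:ℂ)) atTop (nhds 1) := by
    intro i hi
    rw [Finset.mem_range] at hi
    have hev : ∀ᶠ k : ℕ in atTop,
        1 + (((m - i : ℕ)):ℂ) * ((k:ℂ))⁻¹ = (((k + m - i : ℕ)):ℂ) / (k:ℂ) := by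
      filter_upwards [eventually_ge_atTop 1] with k hk
      have hk0 : (k:ℂ) ≠ 0 := Nat.cast_ne_zero.mpr (by omega)
      have h1 : k + m - i = k + (m - i) := by omega
      rw [h1]
      push_cast
      field_simp
    have h2 : Tendsto (fun k : ℕ => 1 + (((m - i : ℕ)):ℂ) * ((k:ℂ))⁻¹) atTop (nhds 1) := by
      have := (tendsto_inv_nat_complex.const_mul ((((m - i : ℕ)):ℂ))).const_add (1:ℂ)
      simpa using this
    exact h2.congr' hev
  have hprodlim : Tendsto (fun k : ℕ =>
      ∏ i ∈ Finset.range m, ((((k + m - i : ℕ)):ℂ) / (k:ℂ))) atTop (nhds 1) := by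
    have := tendsto_finset_prod (Finset.range m) hfac
    simpa using this
  have hlim := hprodlim.div_const ((Nat.factorial m : ℕ) : ℂ)
  refine hlim.congr' ?_
  filter_upwards [eventually_ge_atTop 1] with k hk
  have hk0 : (k:ℂ) ≠ 0 := Nat.cast_ne_zero.mpr (by omega)
  have hm0 : ((Nat.factorial m : ℕ):ℂ) ≠ 0 := Nat.cast_ne_zero.mpr m.factorial_ne_zero
  have hnat : ((k+m).choose m) * Nat.factorial m = ∏ i ∈ Finset.range m, (k + m - i) := by
    rw [Nat.choose_eq_descFactorial_div_factorial,
      Nat.div_mul_cancel (Nat.factorial_dvd_descFactorial _ _),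
      Nat.descFactorial_eq_prod_range]
  have hC : (((k+m).choose m : ℕ) : ℂ) * ((Nat.factorial m : ℕ) : ℂ)
      = ∏ i ∈ Finset.range m, (((k + m - i : ℕ)) : ℂ) := by
    rw [← Nat.cast_prod, ← hnat]; push_cast; ring
  rw [Finset.prod_div_distrib, Finset.prod_const, Finset.card_range]
  field_simp
  linear_combination (-1:ℂ) * hC

lemma key_aux {r : ℝ} (hr : 1 < r) : ∀ (β : ℕ) (A B : ℂ → ℂ),
    DifferentiableOn ℂ A (Metric.ball (0:ℂ) r) → DifferentiableOn ℂ B (Metric.ball (0:ℂ) r) →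
    ∀ d : ℕ → ℂ, (∀ z : ℂ, ‖z‖ < 1 →
      HasSum (fun k : ℕ => d k * z ^ k) (A z + B z * ((1 - z) ^ (β+1))⁻¹)) →
    Tendsto (fun k : ℕ => d k / (k : ℂ) ^ β) atTop (nhds (B 1 / (Nat.factorial β : ℂ))) := by
  have hmem : Metric.ball (0:ℂ) r ∈ nhds (1:ℂ) := by
    refine isOpen_ball.mem_nhds ?_
    rw [mem_ball_zero_iff]
    simpa using hr
  intro β
  induction β with
  | zero =>
    intro A B hA hB d hd
    have hD : DifferentiableOn ℂ (dslope B 1) (Metric.ball (0:ℂ) r) :=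
      (Complex.differentiableOn_dslope hmem).mpr hB
    obtain ⟨e, he, he0⟩ := exists_coeffs_tendsto_zero_aux hr
      (fun z => A z - dslope B 1 z) (hA.sub hD)
    have heq : ∀ k, d k = e k + B 1 := by
      have hz0 := coeffs_eq_zero_aux (fun k => d k - (e k + B 1)) ?_
      · intro k
        have := hz0 k
        linear_combination this
      · intro z hz
        have h1z : (1:ℂ) - z ≠ 0 := by
          intro hc
          have : z = 1 := by linear_combination -hc
          rw [this] at hz; simp at hz
        have h1 := hd z hz
        have h2 := he z hz
        have h3 : HasSum (fun k : ℕ => B 1 * z ^ k) (B 1 * (1 - z)⁻¹) :=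
          (hasSum_geometric_of_norm_lt_one hz).mul_left _
        have h4 := h1.sub (h2.add h3)
        have hk := dslope_mul_aux B z
        convert h4 using 2 with k
        · rfl
        · ring
        · rw [pow_one]
          field_simp
          linear_combination -hk
    have hlim : Tendsto (fun k : ℕ => e k + B 1) atTop (nhds (B 1)) := by
      have := he0.add (tendsto_const_nhds (x := B 1) (f := atTop))
      simpa using this
    simp only [pow_zero, div_one, Nat.factorial_zero, Nat.cast_one]
    exact hlim.congr fun k => (heq k).symm
  | succ β ih =>
    intro A B hA hB d hd
    have hD : DifferentiableOn ℂ (dslope B 1) (Metric.ball (0:ℂ) r) :=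
      (Complex.differentiableOn_dslope hmem).mpr hB
    set D : ℂ → ℂ := fun z => -(dslope B 1 z) with hDdef
    set d' : ℕ → ℂ := fun k => d k - B 1 * (((k + (β+1)).choose (β+1) : ℕ) : ℂ) with hd'def
    have hd' : ∀ z : ℂ, ‖z‖ < 1 →
        HasSum (fun k : ℕ => d' k * z ^ k) (A z + D z * ((1 - z) ^ (β+1))⁻¹) := by
      intro z hz
      have h1z : (1:ℂ) - z ≠ 0 := by
        intro hc
        have : z = 1 := by linear_combination -hc
        rw [this] at hz; simp at hz
      have h1 := hd z hz
      have h2 : HasSum (fun k : ℕ => B 1 * ((((k + (β+1)).choose (β+1) : ℕ):ℂ) * z ^ k))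
          (B 1 * (1 / (1 - z) ^ (β+1+1))) :=
        (hasSum_choose_mul_geometric_of_norm_lt_one (β+1) hz).mul_left _
      have h4 := h1.sub h2
      have hk := dslope_mul_aux B z
      have hval : A z + B z * ((1 - z) ^ (β+1+1))⁻¹ - B 1 * (1 / (1 - z) ^ (β+1+1))
          = A z + D z * ((1 - z) ^ (β+1))⁻¹ := by
        simp only [hDdef]
        field_simp
        linear_combination ((1:ℂ) - z) ^ (β+1) * hk
      have hfun : (fun k : ℕ => d' k * z ^ k)
          = fun b : ℕ => d b * z ^ b - B 1 * ((((b + (β+1)).choose (β+1) : ℕ):ℂ) * z ^ b) := by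
        funext k; simp only [hd'def]; ring
      rw [hfun, ← hval]
      exact h4
    have hIH := ih A D hA hD.neg d' hd'
    have hch := (choose_div_tendsto_aux (β+1)).const_mul (B 1)
    have h1 := hIH.mul tendsto_inv_nat_complex
    have hsum := h1.add hch
    simp only [mul_zero, zero_add] at hsum
    have hpt : ∀ k : ℕ, d' k / (k:ℂ)^β * ((k:ℂ))⁻¹
        + B 1 * ((((k + (β+1)).choose (β+1) : ℕ):ℂ) / (k:ℂ)^(β+1)) = d k / (k:ℂ)^(β+1) := by
      intro k
      rcases eq_or_ne k 0 with hk | hk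
      · subst hk
        simp [pow_succ]
      · have hk0 : (k:ℂ) ≠ 0 := Nat.cast_ne_zero.mpr hk
        simp only [hd'def]
        field_simp
        ring
    have := hsum.congr hpt
    convert this using 2
    rw [mul_one_div]

open Filter in
/-- Asymptotics of Taylor coefficients of `g(z) = A(z) + B(z)(1 - z)^{-β}` with
`A`, `B` analytic on `{|z| < r}`, `r > 1`, `B(1) ≠ 0`, `β ≥ 1`:
`d_k ∼ γ k^{β-1}` with `γ = B(1)/(β-1)!`, i.e. polynomial growth of degree `β-1`. -/
theorem taylor_coefficient_polynomial_growth (r : ℝ) (hr : 1 < r)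
    (β : ℕ) (hβ : 1 ≤ β) (A B : ℂ → ℂ)
    (hA : AnalyticOnNhd ℂ A (Metric.ball (0 : ℂ) r))
    (hB : AnalyticOnNhd ℂ B (Metric.ball (0 : ℂ) r))
    (hB1 : B 1 ≠ 0) (d : ℕ → ℂ)
    (hd : ∀ z : ℂ, ‖z‖ < 1 →
      HasSum (fun k : ℕ => d k * z ^ k) (A z + B z * ((1 - z) ^ β)⁻¹)) :
    ∃ γ : ℂ, γ = B 1 / (Nat.factorial (β - 1) : ℂ) ∧
      Tendsto (fun k : ℕ => d k / (k : ℂ) ^ (β - 1)) atTop (nhds γ) := by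
  obtain ⟨m, rfl⟩ : ∃ m, β = m + 1 := ⟨β - 1, by omega⟩
  refine ⟨B 1 / (Nat.factorial (m + 1 - 1) : ℂ), rfl, ?_⟩
  simp only [Nat.add_sub_cancel]
  exact key_aux hr m A B hA.differentiableOn hB.differentiableOn d hd
end

section
/- Fix a real number μ ≥ 0 and define the sequence (δ_n)_{n≥0} of real numbers by δ_0 = 1, δ_1 = μ + 3, and δ_{n+2} = 2 δ_{n+1} + (μ+1) δ_n for all n ≥ 0. Then δ_n > 0 for all n and lim_{n→∞} (1/n) · log δ_n = log(1 + √(μ+2)). In particular, the algebraic entropy of a generic rotationally symmetric hex system with coefficient polynomials of degree at most μ is bounded above by S_Max(μ) = log(1 + √(μ+2)). -/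
open Filter in
/-- The algebraic entropy of the generic rotationally symmetric hex system:
the degree sequence `δ₀ = 1`, `δ₁ = μ + 3`, `δ_{n+2} = 2δ_{n+1} + (μ+1)δ_n`
is positive and `(1/n) log δ_n → log(1 + √(μ+2))`. -/
theorem hex_generic_entropy (μ : ℝ) (hμ : 0 ≤ μ) (δ : ℕ → ℝ)
    (h0 : δ 0 = 1) (h1 : δ 1 = μ + 3)
    (hrec : ∀ n : ℕ, δ (n + 2) = 2 * δ (n + 1) + (μ + 1) * δ n) :
    (∀ n : ℕ, 0 < δ n) ∧
    Tendsto (fun n : ℕ => Real.log (δ n) / n) atTop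
      (nhds (Real.log (1 + Real.sqrt (μ + 2)))) := by
  set t := Real.sqrt (μ + 2) with htdef
  have ht2 : t ^ 2 = μ + 2 := Real.sq_sqrt (by linarith)
  have ht0 : 0 ≤ t := Real.sqrt_nonneg _
  have ht1 : 1 < t := by nlinarith
  set r := 1 + t with hrdef
  set s := 1 - t with hsdef
  have hr : 0 < r := by simp only [hrdef]; linarith
  have hrs : r * s = -(μ + 1) := by simp only [hrdef, hsdef]; nlinarith
  have h2rs : (2 : ℝ) = r + s := by simp only [hrdef, hsdef]; ring
  have habs : |s| < r := by
    rw [abs_of_nonpos (by simp only [hsdef]; linarith)]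
    simp only [hrdef, hsdef]; linarith
  -- closed form
  have key : ∀ n, δ n = (r ^ (n + 1) + s ^ (n + 1)) / 2 := by
    have H : ∀ n, δ n = (r ^ (n + 1) + s ^ (n + 1)) / 2 ∧
        δ (n + 1) = (r ^ (n + 2) + s ^ (n + 2)) / 2 := by
      intro n
      induction n with
      | zero =>
        constructor
        · rw [h0]; simp only [hrdef, hsdef]; ring_nf
        · rw [h1]; simp only [hrdef, hsdef]; nlinarith
      | succ n ih =>
        refine ⟨ih.2, ?_⟩
        rw [hrec n, ih.1, ih.2]
        have hμ1 : μ + 1 = -(r * s) := by rw [hrs]; ring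
        rw [hμ1]
        nth_rewrite 1 [h2rs]
        ring
    exact fun n => (H n).1
  -- positivity
  have hpowlt : ∀ n : ℕ, |s| ^ (n + 1) < r ^ (n + 1) := fun n =>
    pow_lt_pow_left₀ habs (abs_nonneg _) (Nat.succ_ne_zero n)
  have hsum : ∀ n : ℕ, 0 < r ^ (n + 1) + s ^ (n + 1) := by
    intro n
    have h1' : -(|s| ^ (n + 1)) ≤ s ^ (n + 1) := by
      rw [← abs_pow]; exact neg_abs_le _
    have := hpowlt n
    linarith
  have hpos : ∀ n, 0 < δ n := by
    intro n; rw [key n]; linarith [hsum n]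
  refine ⟨hpos, ?_⟩
  -- factor δ n = r^(n+1) * c n
  set c : ℕ → ℝ := fun n => (1 + (s / r) ^ (n + 1)) / 2 with hcdef
  have hq : |s / r| < 1 := by
    rw [abs_div, abs_of_pos hr, div_lt_one hr]; exact habs
  have hcpos : ∀ n, 0 < c n := by
    intro n
    have h1' : |(s / r) ^ (n + 1)| < 1 := by
      rw [abs_pow]; exact pow_lt_one₀ (abs_nonneg _) hq (Nat.succ_ne_zero n)
    have := neg_abs_le ((s / r) ^ (n + 1))
    simp only [hcdef]
    have : -1 < (s / r) ^ (n + 1) := by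
      have := abs_lt.mp h1'; linarith [this.1]
    linarith
  have hδ : ∀ n, δ n = r ^ (n + 1) * c n := by
    intro n
    rw [key n]
    simp only [hcdef, div_pow]
    field_simp
  have hlog : ∀ n, Real.log (δ n) = (n + 1 : ℕ) * Real.log r + Real.log (c n) := by
    intro n
    rw [hδ n, Real.log_mul (pow_ne_zero _ (ne_of_gt hr)) (ne_of_gt (hcpos n)),
      Real.log_pow]
  -- limits
  have hpow0 : Tendsto (fun n : ℕ => (s / r) ^ (n + 1)) atTop (nhds 0) := by
    have h := tendsto_pow_atTop_nhds_zero_of_abs_lt_one hq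
    exact h.comp (tendsto_add_atTop_nat 1)
  have hc : Tendsto c atTop (nhds (1 / 2)) := by
    have : Tendsto (fun n : ℕ => (1 + (s / r) ^ (n + 1)) / 2) atTop
        (nhds ((1 + 0) / 2)) := ((tendsto_const_nhds.add hpow0).div_const 2)
    simpa using this
  have hlogc : Tendsto (fun n => Real.log (c n)) atTop (nhds (Real.log (1 / 2))) :=
    ((Real.continuousAt_log (by norm_num)).tendsto).comp hc
  have hinv : Tendsto (fun n : ℕ => ((n : ℝ))⁻¹) atTop (nhds 0) :=
    tendsto_inv_atTop_zero.comp tendsto_natCast_atTop_atTop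
  have hratio : Tendsto (fun n : ℕ => ((n : ℝ) + 1) / n) atTop (nhds 1) := by
    have h1' : Tendsto (fun n : ℕ => 1 + ((n : ℝ))⁻¹) atTop (nhds (1 + 0)) :=
      tendsto_const_nhds.add hinv
    apply Tendsto.congr' _ (by simpa using h1')
    filter_upwards [eventually_ge_atTop 1] with n hn
    have hn0 : (n : ℝ) ≠ 0 := Nat.cast_ne_zero.mpr (by omega)
    field_simp
  have hg : Tendsto (fun n : ℕ => Real.log r * (((n : ℝ) + 1) / n)
      + Real.log (c n) * ((n : ℝ))⁻¹) atTop
      (nhds (Real.log r * 1 + Real.log (1 / 2) * 0)) :=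
    ((tendsto_const_nhds.mul hratio).add (hlogc.mul hinv))
  have hg' : Tendsto (fun n : ℕ => Real.log r * (((n : ℝ) + 1) / n)
      + Real.log (c n) * ((n : ℝ))⁻¹) atTop (nhds (Real.log r)) := by
    simpa using hg
  apply Tendsto.congr' _ hg'
  filter_upwards [eventually_ge_atTop 1] with n hn
  have hn0 : (n : ℝ) ≠ 0 := Nat.cast_ne_zero.mpr (by omega)
  rw [hlog n]
  push_cast
  field_simp
end

section
/- Define the sequence (d_n)_{n≥0} of real numbers by d_0 = 1, d_1 = 3, and d_{n+2} = 2 d_{n+1} + 2 d_n for all n ≥ 0. Then d_n > 0 for all n and lim_{n→∞} (1/n) · log d_n = log(1 + √3) > 0. Hence the degree sequence 1, 3, 8, 22, 60, 164, … has non-vanishing algebraic entropy log(1+√3). -/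
open Filter in
/-- The degree sequence `b₃`: `d₀ = 1`, `d₁ = 3`, `d_{n+2} = 2d_{n+1} + 2d_n`
(i.e. 1, 3, 8, 22, 60, 164, …) is positive and has non-vanishing algebraic
entropy `log(1+√3)`. -/
theorem b3_nonvanishing_entropy (d : ℕ → ℝ)
    (h0 : d 0 = 1) (h1 : d 1 = 3)
    (hrec : ∀ n : ℕ, d (n + 2) = 2 * d (n + 1) + 2 * d n) :
    (∀ n : ℕ, 0 < d n) ∧
    Tendsto (fun n : ℕ => Real.log (d n) / n) atTop
      (nhds (Real.log (1 + Real.sqrt 3))) ∧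
    0 < Real.log (1 + Real.sqrt 3) := by
  set α : ℝ := 1 + Real.sqrt 3 with hαdef
  have hs3 : Real.sqrt 3 ^ 2 = 3 := Real.sq_sqrt (by norm_num)
  have hs3pos : (1:ℝ) < Real.sqrt 3 := by nlinarith [Real.sqrt_nonneg 3]
  have hα1 : (1:ℝ) < α := by simp only [hαdef]; linarith
  have hαpos : (0:ℝ) < α := by linarith
  have hsq : α ^ 2 = 2 * α + 2 := by simp only [hαdef]; nlinarith
  have key : ∀ n, α ^ n ≤ d n ∧ d n ≤ 3 * α ^ n := by
    intro n
    induction n using Nat.strong_induction_on with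
    | _ n ih =>
      match n with
      | 0 => simp [h0]
      | 1 =>
        constructor
        · rw [pow_one, h1]
          nlinarith
        · rw [pow_one, h1]
          nlinarith
      | (m+2) =>
        obtain ⟨l1, u1⟩ := ih (m+1) (by omega)
        obtain ⟨l0, u0⟩ := ih m (by omega)
        have e : α ^ (m+2) = 2 * α ^ (m+1) + 2 * α ^ m := by
          rw [show α ^ (m+2) = α ^ m * α ^ 2 by ring, hsq]; ring
        rw [hrec]
        constructor
        · linarith
        · linarith
  have hpos : ∀ n, 0 < d n := fun n => lt_of_lt_of_le (pow_pos hαpos n) (key n).1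
  refine ⟨hpos, ?_, Real.log_pos hα1⟩
  have hlogα : (0:ℝ) < Real.log α := Real.log_pos hα1
  have hupper : Tendsto (fun n : ℕ => Real.log α + Real.log 3 / n) atTop
      (nhds (Real.log α)) := by
    have : Tendsto (fun _ : ℕ => Real.log α) atTop (nhds (Real.log α)) := tendsto_const_nhds
    have h2 : Tendsto (fun n : ℕ => Real.log 3 / n) atTop (nhds 0) :=
      tendsto_const_div_atTop_nhds_zero_nat _
    simpa using this.add h2
  refine tendsto_of_tendsto_of_tendsto_of_le_of_le'
    (tendsto_const_nhds) hupper ?_ ?_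
  · filter_upwards [eventually_ge_atTop 1] with n hn
    have hle : Real.log (α ^ n) ≤ Real.log (d n) :=
      Real.log_le_log (pow_pos hαpos n) (key n).1
    rw [Real.log_pow] at hle
    have hn0 : (0:ℝ) < n := by exact_mod_cast hn
    rw [le_div_iff₀ hn0]
    calc Real.log α * n = n * Real.log α := by ring
      _ ≤ Real.log (d n) := hle
  · filter_upwards [eventually_ge_atTop 1] with n hn
    have hle : Real.log (d n) ≤ Real.log (3 * α ^ n) :=
      Real.log_le_log (hpos n) (key n).2
    rw [Real.log_mul (by norm_num) (by positivity), Real.log_pow] at hle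
    have hn0 : (0:ℝ) < n := by exact_mod_cast hn
    rw [div_le_iff₀ hn0]
    calc Real.log (d n) ≤ Real.log 3 + n * Real.log α := hle
      _ = (Real.log α + Real.log 3 / n) * n := by field_simp; ring
end

section
/- Define the sequence (d_n)_{n≥0} of real numbers by d_0 = 1, d_1 = 2, d_2 = 5, and d_{n+3} = 2 d_{n+2} + 2 d_{n+1} − 2 d_n for all n ≥ 0. Then the sequence is nondecreasing and satisfies d_n ≥ 2ⁿ for all n ≥ 0; consequently liminf_{n→∞} (1/n) · log d_n ≥ log 2 > 0, so the sequence has non-vanishing algebraic entropy (exponential degree growth). -/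
open Filter in
/-- The degree sequence `b₆`: `d₀ = 1`, `d₁ = 2`, `d₂ = 5`,
`d_{n+3} = 2d_{n+2} + 2d_{n+1} - 2d_n` is nondecreasing, satisfies `d_n ≥ 2ⁿ`,
and hence has non-vanishing algebraic entropy (exponential growth). -/
theorem b6_exponential_growth (d : ℕ → ℝ)
    (h0 : d 0 = 1) (h1 : d 1 = 2) (h2 : d 2 = 5)
    (hrec : ∀ n : ℕ, d (n + 3) = 2 * d (n + 2) + 2 * d (n + 1) - 2 * d n) :
    Monotone d ∧ (∀ n : ℕ, (2 : ℝ) ^ n ≤ d n) ∧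
    Real.log 2 ≤ Filter.liminf (fun n : ℕ => Real.log (d n) / n) atTop ∧
    0 < Real.log 2 := by
  have key : ∀ n : ℕ, (2 : ℝ) ^ n ≤ d n ∧ 2 * d n ≤ d (n + 1) ∧
      2 * d (n + 1) ≤ d (n + 2) := by
    intro n
    induction n with
    | zero => rw [h0, h1, h2]; norm_num
    | succ k ih =>
      obtain ⟨hp, hd1, hd2⟩ := ih
      have hpos : (0 : ℝ) < d k := lt_of_lt_of_le (by positivity) hp
      refine ⟨?_, hd2, ?_⟩
      · calc (2 : ℝ) ^ (k + 1) = 2 * 2 ^ k := by ring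
          _ ≤ 2 * d k := by linarith
          _ ≤ d (k + 1) := hd1
      · have := hrec k
        linarith
  have hmono : Monotone d := by
    apply monotone_nat_of_le_succ
    intro n
    have hp := (key n).1
    have hd := (key n).2.1
    have hpos : (0 : ℝ) < d n := lt_of_lt_of_le (by positivity) hp
    linarith
  have hpos : ∀ n : ℕ, (0 : ℝ) < d n := fun n =>
    lt_of_lt_of_le (by positivity) (key n).1
  have hub : ∀ n : ℕ, d n ≤ 3 ^ n := by
    intro n
    induction n using Nat.strong_induction_on with
    | _ n ih =>
      match n with
      | 0 => rw [h0]; norm_num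
      | 1 => rw [h1]; norm_num
      | 2 => rw [h2]; norm_num
      | (m + 3) =>
        have i2 := ih (m + 2) (by omega)
        have i1 := ih (m + 1) (by omega)
        have hp := hpos m
        have := hrec m
        have e2 : (3 : ℝ) ^ (m + 2) = 9 * 3 ^ m := by ring
        have e1 : (3 : ℝ) ^ (m + 1) = 3 * 3 ^ m := by ring
        have e3 : (3 : ℝ) ^ (m + 3) = 27 * 3 ^ m := by ring
        rw [e2] at i2; rw [e1] at i1
        nlinarith [pow_pos (by norm_num : (0:ℝ) < 3) m]
  refine ⟨hmono, fun n => (key n).1, ?_, Real.log_pos (by norm_num)⟩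
  apply Filter.le_liminf_of_le
  · apply Filter.isCoboundedUnder_ge_of_eventually_le atTop (x := Real.log 3)
    filter_upwards [Filter.eventually_gt_atTop 0] with n hn
    have hlog : Real.log (d n) ≤ Real.log ((3:ℝ) ^ n) :=
      Real.log_le_log (hpos n) (hub n)
    rw [Real.log_pow] at hlog
    have hn' : (0 : ℝ) < n := by exact_mod_cast hn
    rw [div_le_iff₀ hn']
    have h3 : (0:ℝ) ≤ Real.log 3 := Real.log_nonneg (by norm_num)
    nlinarith
  · filter_upwards [Filter.eventually_gt_atTop 0] with n hn
    have hp := (key n).1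
    have h2n : (0 : ℝ) < 2 ^ n := by positivity
    have hlog : Real.log ((2:ℝ) ^ n) ≤ Real.log (d n) :=
      Real.log_le_log h2n hp
    rw [Real.log_pow] at hlog
    have hn' : (0 : ℝ) < n := by exact_mod_cast hn
    rw [le_div_iff₀ hn']
    linarith
end

section
/- Define the sequence (d_n)_{n≥0} of real numbers by d_0 = 1, d_1 = 2, d_2 = 4, and d_{n+3} = d_{n+2} + 3 d_{n+1} − d_n for all n ≥ 0. Then the sequence is nondecreasing and satisfies d_n ≥ 2ⁿ for all n ≥ 0; consequently liminf_{n→∞} (1/n) · log d_n ≥ log 2 > 0, so the sequence has non-vanishing algebraic entropy (exponential degree growth). -/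
open Filter in
/-- The degree sequence `b₁`: `d₀ = 1`, `d₁ = 2`, `d₂ = 4`,
`d_{n+3} = d_{n+2} + 3d_{n+1} - d_n` is nondecreasing, satisfies `d_n ≥ 2ⁿ`,
and hence has non-vanishing algebraic entropy (exponential growth). -/
theorem b1_exponential_growth (d : ℕ → ℝ)
    (h0 : d 0 = 1) (h1 : d 1 = 2) (h2 : d 2 = 4)
    (hrec : ∀ n : ℕ, d (n + 3) = d (n + 2) + 3 * d (n + 1) - d n) :
    Monotone d ∧ (∀ n : ℕ, (2 : ℝ) ^ n ≤ d n) ∧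
    Real.log 2 ≤ Filter.liminf (fun n : ℕ => Real.log (d n) / n) atTop ∧
    0 < Real.log 2 := by
  -- invariant
  set Q : ℕ → Prop := fun n => 0 < d n ∧ 2 * d n ≤ d (n + 1) ∧ d (n + 1) ≤ (7/3) * d n
    with hQ
  have key : ∀ n, Q n ∧ Q (n + 1) := by
    intro n
    induction n with
    | zero =>
      constructor <;> (refine ⟨?_, ?_, ?_⟩ <;> simp [hQ, h0, h1, h2] <;> norm_num)
    | succ k ih =>
      obtain ⟨⟨hk0, hk1, hk2⟩, ⟨hk0', hk1', hk2'⟩⟩ := ih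
      refine ⟨⟨hk0', hk1', hk2'⟩, ?_, ?_, ?_⟩
      · linarith
      · have := hrec k
        nlinarith
      · have := hrec k
        nlinarith
  have hpos : ∀ n, 0 < d n := fun n => (key n).1.1
  have hstep : ∀ n, 2 * d n ≤ d (n + 1) := fun n => (key n).1.2.1
  have hmono : Monotone d := by
    apply monotone_nat_of_le_succ
    intro n
    have := hpos n
    have := hstep n
    linarith
  have hpow : ∀ n : ℕ, (2 : ℝ) ^ n ≤ d n := by
    intro n
    induction n with
    | zero => simp [h0]
    | succ k ih =>
      have := hstep k
      calc (2 : ℝ) ^ (k + 1) = 2 * 2 ^ k := by ring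
        _ ≤ 2 * d k := by linarith
        _ ≤ d (k + 1) := this
  refine ⟨hmono, hpow, ?_, Real.log_pos (by norm_num)⟩
  have hev : ∀ᶠ n : ℕ in atTop, Real.log 2 ≤ Real.log (d n) / n := by
    filter_upwards [eventually_ge_atTop 1] with n hn
    have hnpos : (0 : ℝ) < n := by exact_mod_cast hn
    rw [le_div_iff₀ hnpos]
    have h2n : (2 : ℝ) ^ n ≤ d n := hpow n
    have : Real.log ((2 : ℝ) ^ n) ≤ Real.log (d n) :=
      Real.log_le_log (by positivity) h2n
    rw [Real.log_pow] at this
    linarith [this]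
  have hub : ∀ n : ℕ, d n ≤ (7/3 : ℝ) ^ n := by
    intro n
    induction n with
    | zero => simp [h0]
    | succ k ih =>
      have h1 := (key k).1.2.2
      have h2 := hpos k
      calc d (k + 1) ≤ (7/3) * d k := h1
        _ ≤ (7/3) * (7/3 : ℝ) ^ k := by nlinarith
        _ = (7/3 : ℝ) ^ (k + 1) := by ring
  have hcb : IsCoboundedUnder (· ≥ ·) atTop (fun n : ℕ => Real.log (d n) / n) := by
    apply isCoboundedUnder_ge_of_eventually_le (l := atTop) (x := Real.log (7/3))
    filter_upwards [eventually_ge_atTop 1] with n hn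
    have hnpos : (0 : ℝ) < n := by exact_mod_cast hn
    rw [div_le_iff₀ hnpos]
    have : Real.log (d n) ≤ Real.log ((7/3 : ℝ) ^ n) :=
      Real.log_le_log (hpos n) (hub n)
    rw [Real.log_pow] at this
    linarith
  exact le_liminf_of_le hcb hev
end
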